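/- Every nonnegative integer flow of value F ≥ 1 (with nonnegative integer arc values, satisfying flow conservation, on a finite directed graph) supports a path from the source to the sink using only arcs with strictly positive flow value. -/

import Mathlib

/-!
Let `S` be the set of vertices reachable from `v₁` along arcs of positive flow, together
with `v₁` itself. If `vₙ ∉ S`, conservation makes the total excess of `S` equal to `F > 0`.
But the total excess of a vertex set is the flow on the arcs leaving it minus the flow on
the arcs entering it, and no arc of positive flow leaves `S`, so the total excess is `≤ 0`.
-/

/-- Net outflow of `x` at vertex `v`. -/
def excess {V A : Type} [Fintype A] [DecidableEq V] (src tgt : A → V)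
    (x : A → ℤ) (v : V) : ℤ :=
  (∑ a ∈ Finset.univ.filter (fun a => src a = v), x a) -
    (∑ a ∈ Finset.univ.filter (fun a => tgt a = v), x a)

open Finset

section Excess

variable {V A : Type} [Fintype A] [DecidableEq V] (src tgt : A → V) (x : A → ℤ)

theorem sum_excess_eq_sum_arcs (S : Finset V) :
    ∑ v ∈ S, excess src tgt x v =
      ∑ a, ((if src a ∈ S then x a else 0) - if tgt a ∈ S then x a else 0) := by
  unfold excess
  rw [sum_sub_distrib, sum_fiberwise_eq_sum_filter univ S src x,
    sum_fiberwise_eq_sum_filter univ S tgt x, sum_filter, sum_filter, sum_sub_distrib]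

theorem exists_pos_arc_leaving_of_sum_excess_pos (hx : ∀ a, 0 ≤ x a) {S : Finset V}
    (hS : 0 < ∑ v ∈ S, excess src tgt x v) :
    ∃ a, 0 < x a ∧ src a ∈ S ∧ tgt a ∉ S := by
  rw [sum_excess_eq_sum_arcs] at hS
  obtain ⟨a, -, ha⟩ := exists_lt_of_sum_lt (by simpa using hS)
  refine ⟨a, ?_⟩
  by_cases hsa : src a ∈ S <;> by_cases hta : tgt a ∈ S <;> simp_all
  linarith [hx a]

end Excess

section Walks

variable {V A : Type} (src tgt : A → V) (x : A → ℤ)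

def PosWalk (u v : V) : Prop :=
  ∃ (k : ℕ) (p : Fin (k + 1) → A),
    src (p 0) = u ∧ tgt (p (Fin.last k)) = v ∧
    (∀ i, 0 < x (p i)) ∧
    ∀ i : Fin k, tgt (p i.castSucc) = src (p i.succ)

variable {src tgt x}

theorem PosWalk.single {a : A} (hxa : 0 < x a) : PosWalk src tgt x (src a) (tgt a) :=
  ⟨0, fun _ => a, rfl, rfl, fun _ => hxa, fun i => i.elim0⟩

theorem PosWalk.snoc {u : V} {a : A} (h : PosWalk src tgt x u (src a)) (hxa : 0 < x a) :
    PosWalk src tgt x u (tgt a) := by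
  obtain ⟨k, p, h_first, h_last, h_pos, h_chain⟩ := h
  refine ⟨k + 1, Fin.snoc p a, ?_, by simp, ?_, ?_⟩
  · rw [← Fin.castSucc_zero, Fin.snoc_castSucc]
    exact h_first
  · refine Fin.lastCases ?_ (fun j => ?_)
    · simpa using hxa
    · simpa using h_pos j
  · refine Fin.lastCases ?_ (fun j => ?_)
    · rw [Fin.succ_last, Fin.snoc_last, Fin.snoc_castSucc, h_last]
    · rw [Fin.succ_castSucc, Fin.snoc_castSucc, Fin.snoc_castSucc]
      exact h_chain j

theorem PosWalk.exists_tgt_eq {u v : V} (h : PosWalk src tgt x u v) : ∃ a, tgt a = v :=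
  let ⟨k, p, _, h_last, _⟩ := h
  ⟨p (Fin.last k), h_last⟩

end Walks

theorem stmt_6_general {V A : Type} [Fintype A] [DecidableEq V]
    (src tgt : A → V) (v1 vn : V) (hvv : v1 ≠ vn)
    (x : A → ℤ) (hx : ∀ a, 0 ≤ x a) (F : ℤ) (hF : 1 ≤ F)
    (hsrc : excess src tgt x v1 = F)
    (hcons : ∀ v, v ≠ v1 → v ≠ vn → excess src tgt x v = 0) :
    ∃ (k : ℕ) (p : Fin (k + 1) → A),
      src (p 0) = v1 ∧ tgt (p (Fin.last k)) = vn ∧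
      (∀ i, 0 < x (p i)) ∧
      ∀ i : Fin k, tgt (p i.castSucc) = src (p i.succ) := by
  classical
  by_contra h_no_walk
  set S : Finset V := (insert v1 (univ.image tgt)).filter
    fun v => v = v1 ∨ PosWalk src tgt x v1 v
  have mem_S {v : V} : v ∈ S ↔ v = v1 ∨ PosWalk src tgt x v1 v := by
    refine ⟨fun hv => (mem_filter.1 hv).2, fun hv => mem_filter.2 ⟨?_, hv⟩⟩
    rcases hv with rfl | hv
    · exact mem_insert_self _ _
    · obtain ⟨a, rfl⟩ := hv.exists_tgt_eq
      exact mem_insert_of_mem (mem_image_of_mem _ (mem_univ a))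
  have hvn : vn ∉ S := fun hvn => (mem_S.1 hvn).elim (hvv ·.symm) h_no_walk
  have h_sum : ∑ v ∈ S, excess src tgt x v = F :=
    (sum_eq_single_of_mem v1 (mem_S.2 (Or.inl rfl)) fun v hv hne =>
      hcons v hne (ne_of_mem_of_not_mem hv hvn)).trans hsrc
  obtain ⟨a, hxa, hsa, hta⟩ :=
    exists_pos_arc_leaving_of_sum_excess_pos src tgt x hx (S := S) (by omega)
  refine hta (mem_S.2 (Or.inr ?_))
  rcases mem_S.1 hsa with h | h
  · exact h ▸ PosWalk.single hxa
  · exact h.snoc hxa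

/-- every nonnegative integer flow of value `F ≥ 1` supports a
path (walk) from the source to the sink using only arcs of strictly positive
flow value. -/
theorem stmt_6 {V A : Type} [Fintype A] [DecidableEq V]
    (src tgt : A → V) (v1 vn : V) (hvv : v1 ≠ vn)
    (x : A → ℤ) (hx : ∀ a, 0 ≤ x a) (F : ℤ) (hF : 1 ≤ F)
    (hsrc : excess src tgt x v1 = F) (hsnk : excess src tgt x vn = -F)
    (hcons : ∀ v, v ≠ v1 → v ≠ vn → excess src tgt x v = 0) :
    ∃ (k : ℕ) (p : Fin (k + 1) → A),
      src (p 0) = v1 ∧ tgt (p (Fin.last k)) = vn ∧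
      (∀ i, 0 < x (p i)) ∧
      ∀ i : Fin k, tgt (p i.castSucc) = src (p i.succ) :=
  stmt_6_general src tgt v1 vn hvv x hx F hF hsrc hcons
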